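/- arXiv:2503.02199 — 3 statements merged into one kernel-verified Lean document; each statement's English description precedes it below -/
import Mathlib

section
/- Let θ̂ ∈ Θ be an empirical risk minimizer of the mixed empirical risk, i.e., R̂_mix(θ̂) ≤ R̂_mix(θ) for all θ ∈ Θ. Then for every θ⋆ ∈ Θ, the pure-text excess risk of θ̂ satisfies R_txt(θ̂) ≤ R_txt(θ⋆) + 2·(N·ε_txt + M·ε_mul)/(N+M) + (2·M/(N+M))·Δ. In particular, the cross-modal error contributes to the pure-text risk with weight proportional to M/(N+M), the fraction of multi-modal training data. -/
theorem erm_pure_text_excess_risk_bound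
    {Θ : Type*} [Nonempty Θ]
    (N M : ℕ) (hN : 0 < N) (hM : 0 < M)
    (Rtxt Rmul Rhtxt Rhmul : Θ → ℝ)
    (εtxt εmul Δ : ℝ) (hεtxt : 0 ≤ εtxt) (hεmul : 0 ≤ εmul) (hΔ : 0 ≤ Δ)
    (htxt : ∀ θ : Θ, |Rhtxt θ - Rtxt θ| ≤ εtxt)
    (hmul : ∀ θ : Θ, |Rhmul θ - Rmul θ| ≤ εmul)
    (hcross : ∀ θ : Θ, |Rtxt θ - Rmul θ| ≤ Δ)
    (θhat : Θ)
    (hERM : ∀ θ : Θ,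
      ((N : ℝ) * Rhtxt θhat + (M : ℝ) * Rhmul θhat) / ((N : ℝ) + M) ≤
        ((N : ℝ) * Rhtxt θ + (M : ℝ) * Rhmul θ) / ((N : ℝ) + M))
    (θstar : Θ) :
    Rtxt θhat ≤ Rtxt θstar + 2 * ((N : ℝ) * εtxt + (M : ℝ) * εmul) / ((N : ℝ) + M)
      + (2 * (M : ℝ) / ((N : ℝ) + M)) * Δ := by
  set n : ℝ := (N : ℝ) with hn
  set m : ℝ := (M : ℝ) with hm
  have hn0 : 0 < n := by rw [hn]; exact_mod_cast hN
  have hm0 : 0 < m := by rw [hm]; exact_mod_cast hM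
  have hc : 0 < n + m := by linarith
  have h1 := abs_le.mp (htxt θhat)
  have h2 := abs_le.mp (htxt θstar)
  have h3 := abs_le.mp (hmul θhat)
  have h4 := abs_le.mp (hmul θstar)
  have h5 := abs_le.mp (hcross θhat)
  have h6 := abs_le.mp (hcross θstar)
  have hE : n * Rhtxt θhat + m * Rhmul θhat ≤ n * Rhtxt θstar + m * Rhmul θstar :=
    (div_le_div_iff_of_pos_right hc).mp (hERM θstar)
  have key : (n + m) * Rtxt θhat ≤
      (n + m) * Rtxt θstar + 2 * (n * εtxt + m * εmul) + 2 * m * Δ := by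
    nlinarith [mul_le_mul_of_nonneg_left h1.1 hn0.le, mul_le_mul_of_nonneg_left h1.2 hn0.le,
      mul_le_mul_of_nonneg_left h2.1 hn0.le, mul_le_mul_of_nonneg_left h2.2 hn0.le,
      mul_le_mul_of_nonneg_left h3.1 hm0.le, mul_le_mul_of_nonneg_left h3.2 hm0.le,
      mul_le_mul_of_nonneg_left h4.1 hm0.le, mul_le_mul_of_nonneg_left h4.2 hm0.le,
      mul_le_mul_of_nonneg_left h5.1 hm0.le, mul_le_mul_of_nonneg_left h5.2 hm0.le,
      mul_le_mul_of_nonneg_left h6.1 hm0.le, mul_le_mul_of_nonneg_left h6.2 hm0.le]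
  calc Rtxt θhat = ((n + m) * Rtxt θhat) / (n + m) := by field_simp
    _ ≤ ((n + m) * Rtxt θstar + 2 * (n * εtxt + m * εmul) + 2 * m * Δ) / (n + m) := by
        gcongr
    _ = Rtxt θstar + 2 * (n * εtxt + m * εmul) / (n + m) + (2 * m / (n + m)) * Δ := by
        field_simp
end

section
/- Suppose the pure-text uniform convergence event E_txt := {ω : ∀ θ ∈ Θ, |R̂_txt(θ, ω) − R_txt(θ)| ≤ ε_txt} and the multi-modal uniform convergence event E_mul := {ω : ∀ θ ∈ Θ, |R̂_mul(θ, ω) − R_mul(θ)| ≤ ε_mul} each have probability at least 1 − δ. Then with probability at least 1 − 2·δ, the empirical risk minimizer satisfies: for every θ⋆ ∈ Θ, R_txt(θ̂(ω)) ≤ R_txt(θ⋆) + 2·(N·ε_txt + M·ε_mul)/(N+M) + (2·M/(N+M))·Δ. -/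
open MeasureTheory

theorem erm_pure_text_excess_risk_bound_high_probability
    {Θ : Type*} [Nonempty Θ]
    {Ω : Type*} [MeasurableSpace Ω] (P : Measure Ω) [IsProbabilityMeasure P]
    (N M : ℕ) (hN : 0 < N) (hM : 0 < M)
    (Rtxt Rmul : Θ → ℝ) (Rhtxt Rhmul : Θ → Ω → ℝ)
    (εtxt εmul Δ δ : ℝ) (hεtxt : 0 ≤ εtxt) (hεmul : 0 ≤ εmul) (hΔ : 0 ≤ Δ)
    (hδ0 : 0 ≤ δ) (hδ1 : δ ≤ 1)
    (hcross : ∀ θ : Θ, |Rtxt θ - Rmul θ| ≤ Δ)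
    (θhat : Ω → Θ)
    (hERM : ∀ ω : Ω, ∀ θ : Θ,
      ((N : ℝ) * Rhtxt (θhat ω) ω + (M : ℝ) * Rhmul (θhat ω) ω) / ((N : ℝ) + M) ≤
        ((N : ℝ) * Rhtxt θ ω + (M : ℝ) * Rhmul θ ω) / ((N : ℝ) + M))
    (hEtxt_meas : MeasurableSet {ω : Ω | ∀ θ : Θ, |Rhtxt θ ω - Rtxt θ| ≤ εtxt})
    (hEmul_meas : MeasurableSet {ω : Ω | ∀ θ : Θ, |Rhmul θ ω - Rmul θ| ≤ εmul})
    (hPtxt : ENNReal.ofReal (1 - δ) ≤ P {ω : Ω | ∀ θ : Θ, |Rhtxt θ ω - Rtxt θ| ≤ εtxt})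
    (hPmul : ENNReal.ofReal (1 - δ) ≤ P {ω : Ω | ∀ θ : Θ, |Rhmul θ ω - Rmul θ| ≤ εmul}) :
    ENNReal.ofReal (1 - 2 * δ) ≤
      P {ω : Ω | ∀ θstar : Θ,
        Rtxt (θhat ω) ≤ Rtxt θstar + 2 * ((N : ℝ) * εtxt + (M : ℝ) * εmul) / ((N : ℝ) + M)
          + (2 * (M : ℝ) / ((N : ℝ) + M)) * Δ} := by

  set A := {ω : Ω | ∀ θ : Θ, |Rhtxt θ ω - Rtxt θ| ≤ εtxt} with hA
  set B := {ω : Ω | ∀ θ : Θ, |Rhmul θ ω - Rmul θ| ≤ εmul} with hB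
  have hS : (0:ℝ) < (N:ℝ) + M := by positivity
  -- deterministic inclusion
  have hsub : A ∩ B ⊆ {ω : Ω | ∀ θstar : Θ,
      Rtxt (θhat ω) ≤ Rtxt θstar + 2 * ((N : ℝ) * εtxt + (M : ℝ) * εmul) / ((N : ℝ) + M)
        + (2 * (M : ℝ) / ((N : ℝ) + M)) * Δ} := by
    rintro ω ⟨hωA, hωB⟩ θstar
    have h1 := hωA (θhat ω)
    have h2 := hωA θstar
    have h3 := hωB (θhat ω)
    have h4 := hωB θstar
    have h5 := hcross (θhat ω)
    have h6 := hcross θstar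
    have herm := hERM ω θstar
    have herm' : (N : ℝ) * Rhtxt (θhat ω) ω + (M : ℝ) * Rhmul (θhat ω) ω ≤
        (N : ℝ) * Rhtxt θstar ω + (M : ℝ) * Rhmul θstar ω :=
      (div_le_div_iff_of_pos_right hS).mp herm
    rw [abs_le] at h1 h2 h3 h4 h5 h6
    have key : ((N:ℝ)+M) * Rtxt (θhat ω) ≤
        ((N:ℝ)+M) * Rtxt θstar + 2*((N:ℝ)*εtxt+(M:ℝ)*εmul) + 2*(M:ℝ)*Δ := by
      nlinarith [(Nat.cast_pos (α:=ℝ)).mpr hN, (Nat.cast_pos (α:=ℝ)).mpr hM, h1.1, h1.2, h2.1, h2.2,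
        h3.1, h3.2, h4.1, h4.2, h5.1, h5.2, h6.1, h6.2]
    calc Rtxt (θhat ω) = (((N:ℝ)+M) * Rtxt (θhat ω)) / ((N:ℝ)+M) := by field_simp
      _ ≤ (((N:ℝ)+M) * Rtxt θstar + 2*((N:ℝ)*εtxt+(M:ℝ)*εmul) + 2*(M:ℝ)*Δ) / ((N:ℝ)+M) :=
          (div_le_div_iff_of_pos_right hS).mpr key
      _ = Rtxt θstar + 2 * ((N : ℝ) * εtxt + (M : ℝ) * εmul) / ((N : ℝ) + M)
          + (2 * (M : ℝ) / ((N : ℝ) + M)) * Δ := by field_simp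
    try nlinarith [(Nat.cast_pos (α:=ℝ)).mpr hN, (Nat.cast_pos (α:=ℝ)).mpr hM, h1.1, h1.2, h2.1, h2.2,
      h3.1, h3.2, h4.1, h4.2, h5.1, h5.2, h6.1, h6.2]
  have hAc : P Aᶜ ≤ ENNReal.ofReal δ := by
    rw [measure_compl hEtxt_meas (measure_ne_top _ _), measure_univ]
    rw [tsub_le_iff_right]
    calc (1:ENNReal) = ENNReal.ofReal δ + ENNReal.ofReal (1 - δ) := by
          rw [← ENNReal.ofReal_add hδ0 (by linarith)]; simp
      _ ≤ _ := by gcongr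
  have hBc : P Bᶜ ≤ ENNReal.ofReal δ := by
    rw [measure_compl hEmul_meas (measure_ne_top _ _), measure_univ]
    rw [tsub_le_iff_right]
    calc (1:ENNReal) = ENNReal.ofReal δ + ENNReal.ofReal (1 - δ) := by
          rw [← ENNReal.ofReal_add hδ0 (by linarith)]; simp
      _ ≤ _ := by gcongr
  have hcompl : P (A ∩ B)ᶜ ≤ ENNReal.ofReal (2 * δ) := by
    rw [Set.compl_inter]
    calc P (Aᶜ ∪ Bᶜ) ≤ P Aᶜ + P Bᶜ := measure_union_le _ _
      _ ≤ ENNReal.ofReal δ + ENNReal.ofReal δ := by gcongr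
      _ = ENNReal.ofReal (2 * δ) := by rw [← ENNReal.ofReal_add hδ0 hδ0]; ring_nf
  have hmeasAB : MeasurableSet (A ∩ B) := hEtxt_meas.inter hEmul_meas
  have hlow : ENNReal.ofReal (1 - 2 * δ) ≤ P (A ∩ B) := by
    rw [show A ∩ B = ((A ∩ B)ᶜ)ᶜ from (compl_compl _).symm,
      prob_compl_eq_one_sub hmeasAB.compl]
    rw [show ENNReal.ofReal (1 - 2*δ) = 1 - ENNReal.ofReal (2*δ) by
      rw [ENNReal.ofReal_sub _ (by positivity), ENNReal.ofReal_one]]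
    exact tsub_le_tsub_left hcompl 1
  exact hlow.trans (measure_mono hsub)
end

section
/- Suppose the pure-text uniform convergence event E_txt := {ω : ∀ θ ∈ Θ, |R̂_txt(θ, ω) − R_txt(θ)| ≤ ε_txt} and the multi-modal uniform convergence event E_mul := {ω : ∀ θ ∈ Θ, |R̂_mul(θ, ω) − R_mul(θ)| ≤ ε_mul} each have probability at least 1 − δ. Then with probability at least 1 − 2·δ, the empirical risk minimizer satisfies: for every θ⋆ ∈ Θ, R_mul(θ̂(ω)) ≤ R_mul(θ⋆) + 2·(N·ε_txt + M·ε_mul)/(N+M) + (2·N/(N+M))·Δ. -/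
/-!
On the intersection of the two uniform-convergence events the mixed empirical risk
`N R̂_txt + M R̂_mul` stays within `N (ε_txt + Δ) + M ε_mul` of `(N + M) R_mul` at every
parameter, so its minimizer is within twice that of minimizing `(N + M) R_mul`. By the union
bound the intersection fails with probability at most `2δ`.
-/

open MeasureTheory

lemma abs_weighted_add_sub_le {a b x y u v ε₁ ε₂ Δ : ℝ} (ha : 0 ≤ a) (hb : 0 ≤ b)
    (hx : |x - u| ≤ ε₁) (hy : |y - v| ≤ ε₂) (huv : |u - v| ≤ Δ) :
    |a * x + b * y - (a + b) * v| ≤ a * (ε₁ + Δ) + b * ε₂ :=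
  calc |a * x + b * y - (a + b) * v| = |a * ((x - u) + (u - v)) + b * (y - v)| := by ring_nf
    _ ≤ |a * ((x - u) + (u - v))| + |b * (y - v)| := abs_add_le _ _
    _ = a * |(x - u) + (u - v)| + b * |y - v| := by
      rw [abs_mul, abs_mul, abs_of_nonneg ha, abs_of_nonneg hb]
    _ ≤ a * (ε₁ + Δ) + b * ε₂ := by
      gcongr
      exact (abs_add_le _ _).trans (add_le_add hx huv)

lemma le_add_two_mul_of_forall_le_of_forall_abs_sub_le {Θ : Type*} {F G : Θ → ℝ} {θhat : Θ}
    {K : ℝ} (hmin : ∀ θ, F θhat ≤ F θ) (hK : ∀ θ, |F θ - G θ| ≤ K) (θ : Θ) :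
    G θhat ≤ G θ + 2 * K := by
  have hhat := (abs_le.mp (hK θhat)).1
  have hθ := (abs_le.mp (hK θ)).2
  linarith [hmin θ]

lemma ofReal_one_sub_add_le_measure_inter {Ω : Type*} [MeasurableSpace Ω] {P : Measure Ω}
    [IsProbabilityMeasure P] {s t : Set Ω} {δ₁ δ₂ : ℝ} (ht : MeasurableSet t)
    (hPs : ENNReal.ofReal (1 - δ₁) ≤ P s) (hPt : ENNReal.ofReal (1 - δ₂) ≤ P t) :
    ENNReal.ofReal (1 - (δ₁ + δ₂)) ≤ P (s ∩ t) := by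
  rw [← ofReal_measureReal]
  apply ENNReal.ofReal_le_ofReal
  have hs_real : 1 - δ₁ ≤ P.real s := (ENNReal.ofReal_le_iff_le_toReal (by finiteness)).mp hPs
  have ht_real : 1 - δ₂ ≤ P.real t := (ENNReal.ofReal_le_iff_le_toReal (by finiteness)).mp hPt
  linarith [measureReal_union_add_inter (μ := P) (s := s) ht,
    measureReal_le_one (μ := P) (s := s ∪ t)]

theorem erm_multimodal_excess_risk_bound_high_probability_general
    {Θ : Type*}
    {Ω : Type*} [MeasurableSpace Ω] (P : Measure Ω) [IsProbabilityMeasure P]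
    (N M : ℕ) (hN : 0 < N)
    (Rtxt Rmul : Θ → ℝ) (Rhtxt Rhmul : Θ → Ω → ℝ)
    (εtxt εmul Δ δ : ℝ)
    (hcross : ∀ θ : Θ, |Rtxt θ - Rmul θ| ≤ Δ)
    (θhat : Ω → Θ)
    (hERM : ∀ ω : Ω, ∀ θ : Θ,
      ((N : ℝ) * Rhtxt (θhat ω) ω + (M : ℝ) * Rhmul (θhat ω) ω) / ((N : ℝ) + M) ≤
        ((N : ℝ) * Rhtxt θ ω + (M : ℝ) * Rhmul θ ω) / ((N : ℝ) + M))
    (hEmul_meas : MeasurableSet {ω : Ω | ∀ θ : Θ, |Rhmul θ ω - Rmul θ| ≤ εmul})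
    (hPtxt : ENNReal.ofReal (1 - δ) ≤ P {ω : Ω | ∀ θ : Θ, |Rhtxt θ ω - Rtxt θ| ≤ εtxt})
    (hPmul : ENNReal.ofReal (1 - δ) ≤ P {ω : Ω | ∀ θ : Θ, |Rhmul θ ω - Rmul θ| ≤ εmul}) :
    ENNReal.ofReal (1 - 2 * δ) ≤
      P {ω : Ω | ∀ θstar : Θ,
        Rmul (θhat ω) ≤ Rmul θstar + 2 * ((N : ℝ) * εtxt + (M : ℝ) * εmul) / ((N : ℝ) + M)
          + (2 * (N : ℝ) / ((N : ℝ) + M)) * Δ} := by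
  have hNM : (0 : ℝ) < N + M := by positivity
  rw [two_mul]
  refine (ofReal_one_sub_add_le_measure_inter hEmul_meas hPtxt hPmul).trans (measure_mono ?_)
  rintro ω ⟨htxt, hmul⟩ θstar
  have hexcess := le_add_two_mul_of_forall_le_of_forall_abs_sub_le
    (G := fun θ => ((N : ℝ) + M) * Rmul θ)
    (fun θ => (div_le_div_iff_of_pos_right hNM).mp (hERM ω θ))
    (fun θ => abs_weighted_add_sub_le (Nat.cast_nonneg N) (Nat.cast_nonneg M)
      (htxt θ) (hmul θ) (hcross θ)) θstar
  rw [← mul_le_mul_iff_right₀ hNM]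
  field_simp
  linarith

theorem erm_multimodal_excess_risk_bound_high_probability
    {Θ : Type*} [Nonempty Θ]
    {Ω : Type*} [MeasurableSpace Ω] (P : Measure Ω) [IsProbabilityMeasure P]
    (N M : ℕ) (hN : 0 < N) (hM : 0 < M)
    (Rtxt Rmul : Θ → ℝ) (Rhtxt Rhmul : Θ → Ω → ℝ)
    (εtxt εmul Δ δ : ℝ) (hεtxt : 0 ≤ εtxt) (hεmul : 0 ≤ εmul) (hΔ : 0 ≤ Δ)
    (hδ0 : 0 ≤ δ) (hδ1 : δ ≤ 1)
    (hcross : ∀ θ : Θ, |Rtxt θ - Rmul θ| ≤ Δ)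
    (θhat : Ω → Θ)
    (hERM : ∀ ω : Ω, ∀ θ : Θ,
      ((N : ℝ) * Rhtxt (θhat ω) ω + (M : ℝ) * Rhmul (θhat ω) ω) / ((N : ℝ) + M) ≤
        ((N : ℝ) * Rhtxt θ ω + (M : ℝ) * Rhmul θ ω) / ((N : ℝ) + M))
    (hEtxt_meas : MeasurableSet {ω : Ω | ∀ θ : Θ, |Rhtxt θ ω - Rtxt θ| ≤ εtxt})
    (hEmul_meas : MeasurableSet {ω : Ω | ∀ θ : Θ, |Rhmul θ ω - Rmul θ| ≤ εmul})
    (hPtxt : ENNReal.ofReal (1 - δ) ≤ P {ω : Ω | ∀ θ : Θ, |Rhtxt θ ω - Rtxt θ| ≤ εtxt})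
    (hPmul : ENNReal.ofReal (1 - δ) ≤ P {ω : Ω | ∀ θ : Θ, |Rhmul θ ω - Rmul θ| ≤ εmul}) :
    ENNReal.ofReal (1 - 2 * δ) ≤
      P {ω : Ω | ∀ θstar : Θ,
        Rmul (θhat ω) ≤ Rmul θstar + 2 * ((N : ℝ) * εtxt + (M : ℝ) * εmul) / ((N : ℝ) + M)
          + (2 * (N : ℝ) / ((N : ℝ) + M)) * Δ} :=
  erm_multimodal_excess_risk_bound_high_probability_general P N M hN Rtxt Rmul Rhtxt Rhmul εtxt εmul
    Δ δ hcross θhat hERM hEmul_meas hPtxt hPmul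
end
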